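/- Let $N>0$ and let $r,\alpha\in\mathbb{R}^n_{>0}$ with $\sum_j\alpha_j=1$. Suppose $(S^*, I^*)\in\mathbb{R}^n_{\ge 0}\times\mathbb{R}^n_{\ge 0}$ satisfies: (a) $\beta_i(r_i - S_i^*) I_i^* = 0$ for all $i$ with $\beta_i>0$; (b) $d_I\sum_j L_{ij}I_j^* + \beta_i(S_i^*-r_i)I_i^* = 0$ for all $i$; (c) $\sum_i(S_i^*+I_i^*)=N$; where $\mathcal{L}$ is quasi-positive, irreducible with zero column sums and $d_I>0$. Then $I^* = k\alpha$ for some $k\ge 0$, and if $k>0$ then $S^* = r$ and $k = N - \sum_j r_j$. -/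

import Mathlib

/-- A square matrix is irreducible if for every nonempty proper coordinate subset `s`
there is a nonzero entry `L i j` with `j ∈ s` and `i ∉ s`. -/
def Matrix.IsIrreducible' {n : ℕ} (L : Matrix (Fin n) (Fin n) ℝ) : Prop :=
  ∀ s : Finset (Fin n), s.Nonempty → s ≠ Finset.univ →
    ∃ i ∉ s, ∃ j ∈ s, L i j ≠ 0

/-!
Equation (a) kills the reaction term of (b), so `L I* = 0`. For a quasi-positive irreducible
`L`, a nonnegative kernel vector vanishing at one coordinate vanishes everywhere: across an edge
`j → i` leaving its support, `(L w) i ≥ L i j * w j > 0`. Applied to `I* - k α` with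
`k = min_i I*_i / α_i`, this gives `I* = k α`. If `k > 0` then every `I*_i > 0`, so (a) forces
`S* = r`, and (c) reads `∑ r_j + k = N`.
-/

namespace Matrix

variable {n : ℕ} {L : Matrix (Fin n) (Fin n) ℝ}

theorem mulVec_apply_pos_of_nonneg (hquasi : ∀ i j, i ≠ j → 0 ≤ L i j) {w : Fin n → ℝ}
    (hw : ∀ j, 0 ≤ w j) {i j : Fin n} (hwi : w i = 0) (hwj : 0 < w j) (hLij : L i j ≠ 0) :
    0 < (L *ᵥ w) i := by
  have hij : i ≠ j := by rintro rfl; exact hwj.ne' hwi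
  have hterm : 0 < L i j * w j := mul_pos ((hquasi i j hij).lt_of_ne' hLij) hwj
  refine Finset.sum_pos' (fun m _ => ?_) ⟨j, Finset.mem_univ j, hterm⟩
  rcases eq_or_ne i m with rfl | him
  · simp [hwi]
  · exact mul_nonneg (hquasi i m him) (hw m)

theorem eq_zero_of_mulVec_eq_zero_of_nonneg (hquasi : ∀ i j, i ≠ j → 0 ≤ L i j)
    (hirr : L.IsIrreducible') {w : Fin n → ℝ} (hw : ∀ j, 0 ≤ w j) (hLw : L *ᵥ w = 0)
    {i₀ : Fin n} (hwi₀ : w i₀ = 0) : w = 0 := by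
  by_contra hne
  obtain ⟨j₀, hj₀⟩ := Function.ne_iff.mp hne
  set s := Finset.univ.filter fun j => w j ≠ 0
  have hs : s.Nonempty := ⟨j₀, by simpa [s] using hj₀⟩
  have hs' : s ≠ Finset.univ := fun h => by
    simpa [s, hwi₀] using (h.symm ▸ Finset.mem_univ i₀ : i₀ ∈ s)
  obtain ⟨i, hi, j, hj, hLij⟩ := hirr s hs hs'
  have hwi : w i = 0 := by simpa [s] using hi
  have hwj : 0 < w j := (hw j).lt_of_ne' (by simpa [s] using hj)
  simpa [hLw] using mulVec_apply_pos_of_nonneg hquasi hw hwi hwj hLij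

theorem exists_nonneg_eq_smul_of_mulVec_eq_zero (hquasi : ∀ i j, i ≠ j → 0 ≤ L i j)
    (hirr : L.IsIrreducible') {α : Fin n → ℝ} (hLα : L *ᵥ α = 0) (hα : ∀ j, 0 < α j)
    {v : Fin n → ℝ} (hv : ∀ j, 0 ≤ v j) (hLv : L *ᵥ v = 0) :
    ∃ k : ℝ, 0 ≤ k ∧ v = k • α := by
  cases isEmpty_or_nonempty (Fin n)
  · exact ⟨0, le_rfl, Subsingleton.elim _ _⟩
  obtain ⟨i₀, hi₀⟩ := Finite.exists_min fun i => v i / α i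
  set k := v i₀ / α i₀
  have hw : ∀ j, 0 ≤ (v - k • α) j := fun j =>
    sub_nonneg.mpr ((le_div_iff₀ (hα j)).mp (hi₀ j))
  have hw₀ : (v - k • α) i₀ = 0 := by simp [k, div_mul_cancel₀ _ (hα i₀).ne']
  have hLw : L *ᵥ (v - k • α) = 0 := by simp [mulVec_sub, mulVec_smul, hLv, hLα]
  exact ⟨k, div_nonneg (hv i₀) (hα i₀).le,
    sub_eq_zero.mp (eq_zero_of_mulVec_eq_zero_of_nonneg hquasi hirr hw hLw hw₀)⟩

end Matrix

theorem limit_equilibrium_structure_general {n : ℕ}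
    (L : Matrix (Fin n) (Fin n) ℝ)
    (hquasi : ∀ i j, i ≠ j → 0 ≤ L i j)
    (hirr : L.IsIrreducible')
    (α : Fin n → ℝ) (hα0 : L.mulVec α = 0) (hαpos : ∀ j, 0 < α j)
    (hαsum : ∑ j, α j = 1)
    (dI N : ℝ) (hdI : 0 < dI)
    (β r Sstar Istar : Fin n → ℝ)
    (hβ : ∀ i, 0 < β i)
    (hInn : ∀ i, 0 ≤ Istar i)
    (ha : ∀ i, 0 < β i → β i * (r i - Sstar i) * Istar i = 0)
    (hb : ∀ i, dI * (∑ j, L i j * Istar j) + β i * (Sstar i - r i) * Istar i = 0)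
    (hc : ∑ i, (Sstar i + Istar i) = N) :
    ∃ k : ℝ, 0 ≤ k ∧ (∀ i, Istar i = k * α i) ∧
      (0 < k → (∀ i, Sstar i = r i) ∧ k = N - ∑ j, r j) := by
  have hLI : L.mulVec Istar = 0 := funext fun i => by
    have := hb i
    rw [show β i * (Sstar i - r i) * Istar i = 0 by linarith [ha i (hβ i)], add_zero] at this
    exact (mul_eq_zero.mp this).resolve_left hdI.ne'
  obtain ⟨k, hk, hIk⟩ :=
    Matrix.exists_nonneg_eq_smul_of_mulVec_eq_zero hquasi hirr hα0 hαpos hInn hLI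
  have hIk : ∀ i, Istar i = k * α i := fun i => congrFun hIk i
  refine ⟨k, hk, hIk, fun hkpos => ?_⟩
  have hSr : ∀ i, Sstar i = r i := fun i => by
    have hI : Istar i ≠ 0 := by rw [hIk i]; exact (mul_pos hkpos (hαpos i)).ne'
    have := ha i (hβ i)
    simp only [mul_eq_zero, (hβ i).ne', hI, sub_eq_zero, false_or, or_false] at this
    exact this.symm
  refine ⟨hSr, ?_⟩
  simp only [hSr, hIk, Finset.sum_add_distrib, ← Finset.mul_sum, hαsum] at hc
  linarith

/-- For the limit system as `d_S → 0` the infected component is a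
nonnegative multiple `k α` of the Perron vector; if `k > 0` then `S* = r` and
`k = N - ∑ r_j`. -/
theorem limit_equilibrium_structure {n : ℕ}
    (L : Matrix (Fin n) (Fin n) ℝ)
    (hquasi : ∀ i j, i ≠ j → 0 ≤ L i j)
    (hirr : L.IsIrreducible')
    (hcol : ∀ j, ∑ i, L i j = 0)
    (α : Fin n → ℝ) (hα0 : L.mulVec α = 0) (hαpos : ∀ j, 0 < α j)
    (hαsum : ∑ j, α j = 1)
    (dI N : ℝ) (hdI : 0 < dI) (hN : 0 < N)
    (β r Sstar Istar : Fin n → ℝ)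
    (hβ : ∀ i, 0 < β i) (hr : ∀ i, 0 < r i)
    (hSnn : ∀ i, 0 ≤ Sstar i) (hInn : ∀ i, 0 ≤ Istar i)
    (ha : ∀ i, 0 < β i → β i * (r i - Sstar i) * Istar i = 0)
    (hb : ∀ i, dI * (∑ j, L i j * Istar j) + β i * (Sstar i - r i) * Istar i = 0)
    (hc : ∑ i, (Sstar i + Istar i) = N) :
    ∃ k : ℝ, 0 ≤ k ∧ (∀ i, Istar i = k * α i) ∧
      (0 < k → (∀ i, Sstar i = r i) ∧ k = N - ∑ j, r j) :=
  limit_equilibrium_structure_general L hquasi hirr α hα0 hαpos hαsum dI N hdI β r Sstar Istar hβ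
    hInn ha hb hc
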